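/- arXiv:2505.05688 — 3 statements merged into one kernel-verified Lean document; each statement's English description precedes it below -/
import Mathlib

section
/- The Lobachevsky function satisfies L(π/4) = G/2, where G = Σ_{k≥0} (-1)^k/(2k+1)² is Catalan's constant; equivalently, the volume of the hyperbolic regular ideal octahedron, v_oct = 8·L(π/4), equals 4G. -/
open Real

noncomputable def Lob (θ : ℝ) : ℝ := -∫ t in (0:ℝ)..θ, Real.log |2 * Real.sin t|

noncomputable def volB (n : ℝ) : ℝ := 2 * n * Lob (π / n)

noncomputable def vtet : ℝ := 3 * Lob (π / 3)

noncomputable def voct : ℝ := 8 * Lob (π / 4)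

/-!
Put `I = ∫₀^{π/4} log sin` and `J = ∫₀^{π/4} log cos`. Reflecting `t ↦ π/2 - t` turns `J` into
the integral of `log sin` over `[π/4, π/2]`, so `I + J = ∫₀^{π/2} log sin = -(π/2) log 2`.
On the other hand `I - J = ∫₀^{π/4} log tan = ∫₀¹ log x / (1 + x²) dx` (substitute `x = tan t`), and
expanding `1 / (1 + x²)` as a geometric series with `∫₀¹ x^{2k} log x dx = -1/(2k+1)²` gives `-G`.
Hence `I = -(π/4) log 2 - G/2` and `L(π/4) = -(π/4) log 2 - I = G/2`.
-/

open MeasureTheory Set intervalIntegral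

noncomputable def catalanConstant : ℝ := ∑' k : ℕ, (-1 : ℝ) ^ k / (2 * k + 1) ^ 2

lemma ae_sin_ne_zero : ∀ᵐ t : ℝ, sin t ≠ 0 := by
  have hzeros : {t : ℝ | sin t = 0} = range fun n : ℤ => (n : ℝ) * π := by
    ext t; simp [sin_eq_zero_iff]
  simpa using (hzeros ▸ countable_range _ : {t : ℝ | sin t = 0}.Countable).ae_notMem volume

lemma Lob_eq_neg_integral_log_sin (θ : ℝ) :
    Lob θ = -(θ * log 2) - ∫ t in 0..θ, log (sin t) := by
  have hcongr : ∫ t in 0..θ, log |2 * sin t| = ∫ t in 0..θ, (log 2 + log (sin t)) :=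
    integral_congr_ae <| ae_sin_ne_zero.mono fun t ht _ => by
      rw [abs_mul, log_mul (by norm_num) (abs_ne_zero.mpr ht), abs_two, log_abs]
  rw [Lob, hcongr, integral_add (g := fun t => log (sin t)) intervalIntegrable_const
    intervalIntegrable_log_sin, intervalIntegral.integral_const, smul_eq_mul, sub_zero]
  ring

lemma log_eq_zero_of_sq_eq_one {x : ℝ} (hx : x ^ 2 = 1) : log x = 0 := by
  have h := log_pow x 2
  rw [hx, log_one] at h
  push_cast at h
  linarith

lemma log_tan_eq_log_sin_sub_log_cos (x : ℝ) : log (tan x) = log (sin x) - log (cos x) := by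
  rw [tan_eq_sin_div_cos]
  by_cases hs : sin x = 0
  · rw [hs, zero_div, log_zero, log_eq_zero_of_sq_eq_one (by nlinarith [sin_sq_add_cos_sq x])]
    simp
  by_cases hc : cos x = 0
  · rw [hc, div_zero, log_zero, log_eq_zero_of_sq_eq_one (by nlinarith [sin_sq_add_cos_sq x])]
    simp
  exact log_div hs hc

lemma intervalIntegrable_pow_mul_log (n : ℕ) (a b : ℝ) :
    IntervalIntegrable (fun x : ℝ => x ^ n * log x) volume a b :=
  intervalIntegrable_log'.continuousOn_mul (continuous_pow n).continuousOn

lemma integral_pow_mul_log_zero_one (n : ℕ) :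
    ∫ x in (0 : ℝ)..1, x ^ n * log x = -(1 / ((n : ℝ) + 1) ^ 2) := by
  set F : ℝ → ℝ := fun x => x ^ (n + 1) * log x / (n + 1) - x ^ (n + 1) / (n + 1) ^ 2
  have hF_cont : ContinuousOn F (Icc 0 1) := by
    have hF : F = fun x => x ^ n * (x * log x) / (n + 1) - x ^ (n + 1) / (n + 1) ^ 2 := by
      funext x; simp only [F]; ring
    rw [hF]
    fun_prop
  have hF_deriv : ∀ x ∈ Ioo (0 : ℝ) 1, HasDerivAt F (x ^ n * log x) x := by
    intro x hx
    have h := (((hasDerivAt_pow (n + 1) x).mul (hasDerivAt_log hx.1.ne')).div_const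
      ((n : ℝ) + 1)).sub ((hasDerivAt_pow (n + 1) x).div_const (((n : ℝ) + 1) ^ 2))
    refine h.congr_deriv ?_
    have hx0 : x ≠ 0 := hx.1.ne'
    rw [Nat.add_sub_cancel]
    push_cast
    field_simp
    ring
  rw [integral_eq_sub_of_hasDerivAt_of_le zero_le_one hF_cont hF_deriv
    (intervalIntegrable_pow_mul_log n 0 1)]
  simp [F]

lemma summable_one_div_two_mul_add_one_sq :
    Summable fun k : ℕ => 1 / (2 * (k : ℝ) + 1) ^ 2 := by
  have h := (summable_one_div_nat_pow.mpr one_lt_two).comp_injective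
    (i := fun k : ℕ => 2 * k + 1) fun a b hab => by simpa using hab
  simpa [Function.comp_def] using h

lemma hasSum_integral_log_div_one_add_sq :
    HasSum (fun k : ℕ => -((-1 : ℝ) ^ k / (2 * k + 1) ^ 2))
      (∫ x in (0 : ℝ)..1, log x / (1 + x ^ 2)) := by
  set F : ℕ → ℝ → ℝ := fun k x => (-1) ^ k * (x ^ (2 * k) * log x)
  have hF_int (k : ℕ) : Integrable (F k) (volume.restrict (Ioc 0 1)) :=
    ((intervalIntegrable_pow_mul_log (2 * k) 0 1).1.const_mul _)
  have hF_integral (k : ℕ) : ∫ x in Ioc 0 1, F k x = -((-1 : ℝ) ^ k / (2 * k + 1) ^ 2) := by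
    rw [MeasureTheory.integral_const_mul, ← integral_of_le zero_le_one,
      integral_pow_mul_log_zero_one]
    push_cast
    ring
  have hF_norm (k : ℕ) : ∫ x in Ioc 0 1, ‖F k x‖ = 1 / (2 * (k : ℝ) + 1) ^ 2 := by
    have hF_abs : EqOn (fun x => ‖F k x‖) (fun x => -(x ^ (2 * k) * log x)) (Ioc 0 1) :=
      fun x hx => by
        simp only [F, norm_mul, norm_pow, norm_neg, norm_one, one_pow, one_mul, Real.norm_eq_abs,
          abs_of_pos hx.1, abs_of_nonpos (log_nonpos hx.1.le hx.2)]
        ring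
    rw [setIntegral_congr_fun measurableSet_Ioc hF_abs, MeasureTheory.integral_neg,
      ← integral_of_le zero_le_one, integral_pow_mul_log_zero_one]
    push_cast
    ring
  have hF_tsum : EqOn (fun x => ∑' k, F k x) (fun x => log x / (1 + x ^ 2)) (Ioc 0 1) := by
    intro x ⟨hx0, hx1⟩
    rcases hx1.eq_or_lt with rfl | hx1
    · simp [F]
    have hgeom : ∑' k : ℕ, (-x ^ 2) ^ k = (1 + x ^ 2)⁻¹ := by
      rw [tsum_geometric_of_norm_lt_one, sub_neg_eq_add]
      rw [norm_neg, norm_pow, Real.norm_eq_abs, abs_of_pos hx0]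
      nlinarith
    simp only [F, ← mul_assoc, pow_mul, ← mul_pow, neg_one_mul]
    rw [tsum_mul_right, hgeom, div_eq_inv_mul]
  have h := hasSum_integral_of_summable_integral_norm hF_int
    (by simpa only [hF_norm] using summable_one_div_two_mul_add_one_sq)
  rw [setIntegral_congr_fun measurableSet_Ioc hF_tsum, ← integral_of_le zero_le_one] at h
  simpa only [hF_integral] using h

lemma integral_log_tan_zero_pi_div_four :
    ∫ t in (0 : ℝ)..π / 4, log (tan t) = ∫ x in (0 : ℝ)..1, log x / (1 + x ^ 2) := by
  have h := integral_image_eq_integral_abs_deriv_smul (measurableSet_Ioc (a := 0) (b := 1))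
    (fun x _ => (hasDerivAt_arctan x).hasDerivWithinAt) arctan_injective.injOn
    (fun t => log (tan t))
  rw [continuous_arctan.image_Ioc_of_strictMono arctan_strictMono, arctan_zero,
    arctan_one] at h
  rw [integral_of_le (by positivity), integral_of_le zero_le_one, h]
  refine setIntegral_congr_fun measurableSet_Ioc fun x _ => ?_
  rw [tan_arctan, abs_of_pos (by positivity), smul_eq_mul, one_div_mul_eq_div]

lemma integral_log_sin_zero_pi_div_four :
    ∫ t in (0 : ℝ)..π / 4, log (sin t) = -(π / 4 * log 2) - catalanConstant / 2 := by
  have hsin (a b : ℝ) : IntervalIntegrable (fun t => log (sin t)) volume a b :=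
    intervalIntegrable_log_sin
  have hcos : IntervalIntegrable (fun t => log (cos t)) volume 0 (π / 4) :=
    intervalIntegrable_log_cos
  have hcos_reflect : ∫ t in (0 : ℝ)..π / 4, log (cos t) = ∫ t in π / 4..π / 2, log (sin t) := by
    simp only [← sin_pi_div_two_sub]
    rw [integral_comp_sub_left (fun t => log (sin t))]
    ring_nf
  have hadd : (∫ t in (0 : ℝ)..π / 4, log (sin t)) + ∫ t in (0 : ℝ)..π / 4, log (cos t)
      = -log 2 * π / 2 := by
    rw [hcos_reflect, integral_add_adjacent_intervals (hsin _ _) (hsin _ _),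
      integral_log_sin_zero_pi_div_two]
  have hsub : (∫ t in (0 : ℝ)..π / 4, log (sin t)) - ∫ t in (0 : ℝ)..π / 4, log (cos t)
      = -catalanConstant := by
    rw [← integral_sub (hsin _ _) hcos]
    simp only [← log_tan_eq_log_sin_sub_log_cos]
    rw [integral_log_tan_zero_pi_div_four, hasSum_integral_log_div_one_add_sq.tsum_eq.symm,
      tsum_neg, catalanConstant]
  linarith

theorem Lob_pi_div_four : Lob (π / 4) = catalanConstant / 2 := by
  rw [Lob_eq_neg_integral_log_sin, integral_log_sin_zero_pi_div_four]
  ring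

theorem stmt3 :
    Lob (π / 4) = (∑' k : ℕ, (-1 : ℝ) ^ k / (2 * k + 1) ^ 2) / 2 ∧
    voct = 4 * ∑' k : ℕ, (-1 : ℝ) ^ k / (2 * k + 1) ^ 2 := by
  refine ⟨Lob_pi_div_four, ?_⟩
  rw [voct, Lob_pi_div_four, catalanConstant]
  ring
end

section
/- For every integer n ≥ 3, the volume of the hyperbolic regular ideal n-bipyramid satisfies vol(B_n) = 2n·L(π/n) < 2π·log(n/2). -/
open Real

/-!
Since `sin t ≥ t - t³/6`, for `0 < t` with `t² ≤ 2` one has `log (2 sin t) ≥ log (2t) - t²/4`;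
integrating, `L(θ) ≤ θ - θ log (2θ) + θ³/12`. At `θ = π/n` this gives
`vol(B_n) ≤ 2π log (n/2) + 2π (1 - log π + π²/(12n²))`, and the bracket is negative for `n ≥ 3`
because `log π > 1.1`.
-/

open intervalIntegral

lemma log_two_mul_sub_sq_div_four_le_log_two_mul_sin {t : ℝ} (ht : 0 < t) (ht2 : t ^ 2 ≤ 2) :
    log (2 * t) - t ^ 2 / 4 ≤ log (2 * sin t) := by
  have hsin : t - t ^ 3 / 6 ≤ sin t := sin_ge_sub_cube ht.le
  have hsin_pos : 0 < sin t := by nlinarith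
  -- `(1 - t²/6)(1 + t²/4) = 1 + t²(2 - t²)/24 ≥ 1`
  have hratio : t / sin t ≤ 1 + t ^ 2 / 4 := by
    rw [div_le_iff₀ hsin_pos]
    nlinarith [mul_le_mul_of_nonneg_left hsin (by positivity : (0 : ℝ) ≤ 1 + t ^ 2 / 4),
      mul_nonneg (pow_pos ht 3).le (sub_nonneg.2 ht2)]
  have hlog : 1 - t / sin t ≤ log (sin t / t) := by
    simpa using one_sub_inv_le_log_of_pos (div_pos hsin_pos ht)
  have hsplit : log (2 * sin t) = log (2 * t) + log (sin t / t) := by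
    rw [← log_mul (by positivity) (by positivity)]
    congr 1
    field_simp
  linarith

lemma integral_log_two_mul (θ : ℝ) :
    ∫ t in (0 : ℝ)..θ, log (2 * t) = θ * log (2 * θ) - θ := by
  rw [integral_comp_mul_left _ two_ne_zero, integral_log]
  simp only [mul_zero, zero_mul, sub_zero, add_zero, smul_eq_mul]
  ring

lemma intervalIntegrable_log_abs_two_mul_sin (a b : ℝ) :
    IntervalIntegrable (fun t => log |2 * sin t|) MeasureTheory.volume a b :=
  (analyticOnNhd_const.mul analyticOnNhd_sin).meromorphicOn.intervalIntegrable_log_norm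

lemma intervalIntegrable_log_two_mul (a b : ℝ) :
    IntervalIntegrable (fun t => log (2 * t)) MeasureTheory.volume a b :=
  (analyticOnNhd_const.mul analyticOnNhd_id).meromorphicOn.intervalIntegrable_log

lemma Lob_le {θ : ℝ} (hθ : 0 < θ) (hθ2 : θ ^ 2 ≤ 2) :
    Lob θ ≤ θ - θ * log (2 * θ) + θ ^ 3 / 12 := by
  have hsq : IntervalIntegrable (fun t : ℝ => t ^ 2 / 4) MeasureTheory.volume 0 θ :=
    (by fun_prop : Continuous fun t : ℝ => t ^ 2 / 4).intervalIntegrable 0 θ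
  have hint : ∫ t in (0 : ℝ)..θ, (log (2 * t) - t ^ 2 / 4) = θ * log (2 * θ) - θ - θ ^ 3 / 12 := by
    rw [integral_sub (intervalIntegrable_log_two_mul 0 θ) hsq, integral_log_two_mul,
      integral_div, integral_pow]
    ring
  have hmono : ∫ t in (0 : ℝ)..θ, (log (2 * t) - t ^ 2 / 4) ≤ ∫ t in (0 : ℝ)..θ, log |2 * sin t| := by
    apply integral_mono_on_of_le_Ioo hθ.le _ (intervalIntegrable_log_abs_two_mul_sin 0 θ)
    · intro t ht
      rw [log_abs]
      exact log_two_mul_sub_sq_div_four_le_log_two_mul_sin ht.1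
        (by nlinarith [ht.1, ht.2])
    · exact (intervalIntegrable_log_two_mul 0 θ).sub hsq
  rw [Lob]
  linarith

lemma log_pi_gt_d1 : 1.1 < log π := by
  rw [lt_log_iff_exp_lt pi_pos]
  calc exp 1.1 = exp 1 * exp 0.1 := by rw [← exp_add]; norm_num
    _ < 2.7182818286 * (1 / (1 - 0.1)) := by
      gcongr
      · exact exp_one_lt_d9
      · exact exp_bound_div_one_sub_of_interval' (by norm_num) (by norm_num)
    _ < 3.14 := by norm_num
    _ < π := pi_gt_d2

lemma volB_le {n : ℝ} (hn : 0 < n) (hθ2 : (π / n) ^ 2 ≤ 2) :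
    volB n ≤ 2 * π * log (n / 2) + 2 * π * (1 - log π + π ^ 2 / (12 * n ^ 2)) := by
  have hlog : log (2 * (π / n)) = log π - log (n / 2) := by
    rw [← log_div pi_pos.ne' (by positivity)]
    congr 1
    field_simp
  calc volB n ≤ 2 * n * (π / n - π / n * log (2 * (π / n)) + (π / n) ^ 3 / 12) :=
        mul_le_mul_of_nonneg_left (Lob_le (by positivity) hθ2) (by positivity)
    _ = _ := by
      rw [hlog]
      field_simp
      ring

theorem stmt4 (n : ℕ) (hn : 3 ≤ n) : volB n < 2 * π * Real.log (n / 2) := by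
  have hn3 : (3 : ℝ) ≤ n := by exact_mod_cast hn
  have hpi2 : π ^ 2 < 10 := by nlinarith [pi_lt_d2, pi_pos]
  have hθ2 : (π / n) ^ 2 ≤ 2 := by
    rw [div_pow, div_le_iff₀ (by positivity)]
    nlinarith
  have hcorr : π ^ 2 / (12 * (n : ℝ) ^ 2) < 1 / 10 := by
    rw [div_lt_iff₀ (by positivity)]
    nlinarith
  have hneg : 1 - log π + π ^ 2 / (12 * (n : ℝ) ^ 2) < 0 := by linarith [log_pi_gt_d1]
  linarith [volB_le (by positivity) hθ2, mul_neg_of_pos_of_neg two_pi_pos hneg]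
end

section
/- Fix an integer s ≥ 2. Then for every integer n ≥ 2, vol(B_{ns}) − vol(B_n) < 2π·log s, i.e. 2ns·L(π/(ns)) − 2n·L(π/n) < 2π·log s. -/
/-!
With `b = π / n`, the substitution `t = u / s` turns `s · Lob (b / s)` into
`-∫₀^b log |2 sin (u / s)| du`, so
`s · Lob (b / s) - Lob b = ∫₀^b log (sin u / sin (u / s)) du`.
Strict concavity of `sin` on `[0, π]` gives `sin u < s · sin (u / s)` for `0 < u ≤ π`,
hence the integrand is below `log s`; multiplying by `2n` yields `2n · b · log s = 2π log s`.
-/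

open Real

open MeasureTheory Set intervalIntegral

theorem sin_lt_mul_sin_div {s u : ℝ} (hs : 1 < s) (hu : u ∈ Ioc 0 π) :
    sin u < s * sin (u / s) := by
  have hs0 : 0 < s := one_pos.trans hs
  have h := strictConcaveOn_sin_Icc.2 ⟨hu.1.le, hu.2⟩ ⟨le_rfl, pi_pos.le⟩ hu.1.ne'
    (inv_pos.2 hs0) (sub_pos.2 (inv_lt_one_of_one_lt₀ hs)) (add_sub_cancel _ _)
  simp only [smul_eq_mul, sin_zero, mul_zero, add_zero] at h
  rwa [inv_mul_eq_div, inv_mul_eq_div, div_lt_iff₀' hs0] at h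

theorem intervalIntegrable_log_abs_two_mul_sin_mul (c a b : ℝ) :
    IntervalIntegrable (fun t => log |2 * sin (c * t)|) volume a b := by
  have hf : AnalyticOnNhd ℝ (fun t => 2 * sin (c * t)) (uIcc a b) := fun _ _ => by fun_prop
  simpa only [Function.comp_def, log_abs] using hf.meromorphicOn.intervalIntegrable_log

theorem log_abs_two_mul_sin_sub_lt {s u : ℝ} (hs : 1 < s) (hu : u ∈ Ioo 0 π) :
    log |2 * sin u| - log |2 * sin (u / s)| < log s := by
  have hs0 : 0 < s := one_pos.trans hs
  have hsin : 0 < sin u := sin_pos_of_pos_of_lt_pi hu.1 hu.2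
  have hsin_div : 0 < sin (u / s) := sin_pos_of_pos_of_lt_pi (div_pos hu.1 hs0)
    ((div_le_self hu.1.le hs.le).trans_lt hu.2)
  rw [abs_of_pos (by positivity : 0 < 2 * sin u),
    abs_of_pos (by positivity : 0 < 2 * sin (u / s)), sub_lt_iff_lt_add',
    ← log_mul (by positivity) hs0.ne']
  refine log_lt_log (by positivity) ?_
  nlinarith [sin_lt_mul_sin_div hs (Ioo_subset_Ioc_self hu)]

theorem mul_Lob_div_sub_Lob_lt {s b : ℝ} (hs : 1 < s) (hb : b ∈ Ioc 0 π) :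
    s * Lob (b / s) - Lob b < b * log s := by
  have hs0 : 0 < s := one_pos.trans hs
  set f : ℝ → ℝ := fun t => log |2 * sin t|
  have hf : IntervalIntegrable f volume 0 b := by
    simpa only [one_mul] using intervalIntegrable_log_abs_two_mul_sin_mul 1 0 b
  have hf_div : IntervalIntegrable (fun u => f (u / s)) volume 0 b := by
    simpa only [inv_mul_eq_div] using intervalIntegrable_log_abs_two_mul_sin_mul s⁻¹ 0 b
  have hrescale : s * Lob (b / s) = -∫ u in 0..b, f (u / s) := by
    rw [integral_comp_div f hs0.ne', Lob, zero_div, smul_eq_mul, mul_neg]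
  have hpos : 0 < ∫ u in 0..b, (log s - (f u - f (u / s))) :=
    intervalIntegral_pos_of_pos_on (intervalIntegrable_const.sub (hf.sub hf_div))
      (fun u hu => sub_pos.2 (log_abs_two_mul_sin_sub_lt hs ⟨hu.1, hu.2.trans_le hb.2⟩)) hb.1
  rw [integral_sub intervalIntegrable_const (hf.sub hf_div), integral_sub hf hf_div,
    intervalIntegral.integral_const, smul_eq_mul, sub_zero] at hpos
  rw [hrescale, Lob]
  linarith

theorem volB_mul_sub_volB_lt {n s : ℝ} (hn : 1 ≤ n) (hs : 1 < s) :
    volB (n * s) - volB n < 2 * π * log s := by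
  have hn0 : 0 < n := one_pos.trans_le hn
  have hb : π / n ∈ Ioc 0 π := ⟨by positivity, div_le_self pi_pos.le hn⟩
  calc volB (n * s) - volB n = 2 * n * (s * Lob (π / n / s) - Lob (π / n)) := by
        rw [volB, volB, div_div]; ring
    _ < 2 * n * (π / n * log s) := by gcongr; exact mul_Lob_div_sub_Lob_lt hs hb
    _ = 2 * π * log s := by field_simp

theorem stmt6 (s : ℕ) (hs : 2 ≤ s) (n : ℕ) (hn : 2 ≤ n) :
    volB (n * s) - volB n < 2 * π * Real.log s :=
  volB_mul_sub_volB_lt (by exact_mod_cast hn.trans' one_le_two) (by exact_mod_cast hs)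
end
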